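/- arXiv:2312.04629 — 3 statements merged into one kernel-verified Lean document; each statement's English description precedes it below -/
import Mathlib

section
/- For a bounded self-adjoint operator A on a Hilbert space whose spectrum is contained in the open interval (0,1), the identity log(A⁻¹ - 1) = ∫₀^∞ [(A + μ)⁻¹ - (1 - A + μ)⁻¹] dμ holds, where the operator functions are defined by the continuous functional calculus. -/
/-!
The scalar identity comes from the antiderivative `log (x + μ) - log (1 - x + μ)`, which tends to
`0` as `μ → ∞`. To lift it to operators, note that the spectrum, a compact subset of `(0, 1)`, lies
in `[m, 1 - m]` for some `m > 0`; there the integrand is dominated by `(μ + m)⁻²` uniformly in `x`,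
which is what lets the continuous functional calculus commute with the integral.
-/

open MeasureTheory Set Filter Topology

lemma exists_pos_le_and_le_one_sub_of_isCompact {K : Set ℝ} (hK : IsCompact K)
    (hK01 : K ⊆ Ioo 0 1) : ∃ m > 0, ∀ x ∈ K, m ≤ x ∧ m ≤ 1 - x := by
  obtain ⟨m, hm, hmK⟩ := hK.exists_forall_le' (f := fun x => min x (1 - x))
    (by fun_prop) (a := 0) fun x hx => lt_min (hK01 hx).1 (sub_pos.mpr (hK01 hx).2)
  exact ⟨m, hm, fun x hx => le_min_iff.mp (hmK x hx)⟩

lemma abs_inv_add_sub_inv_add_le {a b m μ : ℝ} (hm : 0 < m) (ha : m ≤ a) (hb : m ≤ b)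
    (hμ : 0 ≤ μ) : |(a + μ)⁻¹ - (b + μ)⁻¹| ≤ |b - a| * ((μ + m) ^ 2)⁻¹ := by
  have haμ : 0 < a + μ := by linarith
  have hbμ : 0 < b + μ := by linarith
  rw [inv_sub_inv haμ.ne' hbμ.ne', abs_div, abs_of_pos (mul_pos haμ hbμ), div_eq_mul_inv,
    add_sub_add_right_eq_sub]
  gcongr
  nlinarith

lemma integrableOn_Ioi_inv_add_sq {m : ℝ} (hm : 0 < m) :
    IntegrableOn (fun μ : ℝ => ((μ + m) ^ 2)⁻¹) (Ioi 0) := by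
  refine (integrableOn_add_rpow_Ioi_of_lt (a := -2) (by norm_num) (by linarith)).congr_fun
    (fun μ hμ => ?_) measurableSet_Ioi
  change (μ + m) ^ (-2 : ℝ) = _
  rw [Real.rpow_neg (by linarith [mem_Ioi.mp hμ]), Real.rpow_two]

lemma integrableOn_Ioi_inv_add_sub_inv_add {a b : ℝ} (ha : 0 < a) (hb : 0 < b) :
    IntegrableOn (fun μ : ℝ => (a + μ)⁻¹ - (b + μ)⁻¹) (Ioi 0) := by
  refine ((integrableOn_Ioi_inv_add_sq (lt_min ha hb)).const_mul |b - a|).mono'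
    (by fun_prop (disch := exact fun μ hμ => by positivity))
    (ae_restrict_of_forall_mem measurableSet_Ioi fun μ hμ => ?_)
  exact abs_inv_add_sub_inv_add_le (lt_min ha hb) (min_le_left a b) (min_le_right a b)
    (le_of_lt hμ)

lemma integral_Ioi_inv_add_sub_inv_add {a b : ℝ} (ha : 0 < a) (hb : 0 < b) :
    ∫ μ in Ioi 0, ((a + μ)⁻¹ - (b + μ)⁻¹) = Real.log b - Real.log a := by
  have hderiv : ∀ μ ∈ Ici (0 : ℝ), HasDerivAt (fun μ => Real.log (a + μ) - Real.log (b + μ))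
      ((a + μ)⁻¹ - (b + μ)⁻¹) μ := by
    intro μ hμ
    have hμ0 : 0 ≤ μ := hμ
    have h := (((hasDerivAt_id' μ).const_add a).log (by positivity)).sub
      (((hasDerivAt_id' μ).const_add b).log (by positivity))
    simp only [one_div] at h
    exact h
  have hlim : Tendsto (fun μ => Real.log (a + μ) - Real.log (b + μ)) atTop (𝓝 0) := by
    have h := (Real.tendsto_log_comp_add_sub_log a).sub (Real.tendsto_log_comp_add_sub_log b)
    rw [sub_zero] at h
    refine h.congr fun μ => ?_
    rw [add_comm μ a, add_comm μ b]
    ring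
  rw [integral_Ioi_of_hasDerivAt_of_tendsto' hderiv (integrableOn_Ioi_inv_add_sub_inv_add ha hb)
    hlim]
  simp

lemma log_inv_sub_one_eq_log_one_sub_sub_log {x : ℝ} (hx0 : x ≠ 0) (hx1 : x ≠ 1) :
    Real.log (x⁻¹ - 1) = Real.log (1 - x) - Real.log x := by
  rw [← Real.log_div (sub_ne_zero.mpr hx1.symm) hx0]
  congr 1
  field_simp

lemma continuousOn_uncurry_inv_add_sub_inv_one_sub_add :
    ContinuousOn (Function.uncurry fun μ x : ℝ => (x + μ)⁻¹ - (1 - x + μ)⁻¹)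
      (Ici 0 ×ˢ Ioo 0 1) := by
  refine ContinuousOn.sub (ContinuousOn.inv₀ (by fun_prop) ?_) (ContinuousOn.inv₀ (by fun_prop) ?_)
  · rintro ⟨μ, x⟩ ⟨hμ, hx⟩
    exact (add_pos_of_pos_of_nonneg hx.1 hμ).ne'
  · rintro ⟨μ, x⟩ ⟨hμ, hx⟩
    exact (add_pos_of_pos_of_nonneg (sub_pos.mpr hx.2) hμ).ne'

/-- For a bounded self-adjoint operator `A` with spectrum contained in `(0,1)`,
`log (A⁻¹ - 1) = ∫₀^∞ [(A+μ)⁻¹ - (1-A+μ)⁻¹] dμ`, the operator functions being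
defined via the continuous functional calculus and the integral being a Bochner
integral of bounded operators. -/
theorem log_inv_sub_one_eq_integral_resolvents
    {H : Type*} [NormedAddCommGroup H] [InnerProductSpace ℂ H] [CompleteSpace H]
    (A : H →L[ℂ] H) (hA : IsSelfAdjoint A)
    (hspec : spectrum ℝ A ⊆ Set.Ioo (0 : ℝ) 1) :
    cfc (fun x : ℝ => Real.log (x⁻¹ - 1)) A
      = ∫ μ in Set.Ioi (0 : ℝ),
          (cfc (fun x : ℝ => (x + μ)⁻¹) A - cfc (fun x : ℝ => (1 - x + μ)⁻¹) A) := by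
  obtain ⟨m, hm, hmA⟩ := exists_pos_le_and_le_one_sub_of_isCompact
    (ContinuousFunctionalCalculus.isCompact_spectrum A) hspec
  have hcont := continuousOn_uncurry_inv_add_sub_inv_one_sub_add.mono
    (prod_mono Ioi_subset_Ici_self hspec)
  have hbound : ∀ᵐ μ ∂(volume.restrict (Ioi (0 : ℝ))), ∀ x ∈ spectrum ℝ A,
      ‖(x + μ)⁻¹ - (1 - x + μ)⁻¹‖ ≤ ((μ + m) ^ 2)⁻¹ := by
    refine ae_restrict_of_forall_mem measurableSet_Ioi fun μ hμ x hx => ?_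
    obtain ⟨hx0, hx1⟩ := hspec hx
    refine (abs_inv_add_sub_inv_add_le hm (hmA x hx).1 (hmA x hx).2 (le_of_lt hμ)).trans
      (mul_le_of_le_one_left (by positivity) (abs_le.mpr ⟨by linarith, by linarith⟩))
  calc cfc (fun x : ℝ => Real.log (x⁻¹ - 1)) A
      = cfc (fun x : ℝ => ∫ μ in Ioi 0, ((x + μ)⁻¹ - (1 - x + μ)⁻¹)) A := by
        refine cfc_congr fun x hx => ?_
        rw [integral_Ioi_inv_add_sub_inv_add (hspec hx).1 (sub_pos.mpr (hspec hx).2),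
          log_inv_sub_one_eq_log_one_sub_sub_log (hspec hx).1.ne' (hspec hx).2.ne]
    _ = ∫ μ in Ioi 0, cfc (fun x : ℝ => (x + μ)⁻¹ - (1 - x + μ)⁻¹) A :=
        cfc_setIntegral measurableSet_Ioi _ _ A hcont hbound
          (integrableOn_Ioi_inv_add_sq hm).hasFiniteIntegral
    _ = _ := by
        refine setIntegral_congr_fun measurableSet_Ioi fun μ (hμ : 0 < μ) => cfc_sub _ _ A
          (ContinuousOn.inv₀ (by fun_prop) fun x hx => ?_)
          (ContinuousOn.inv₀ (by fun_prop) fun x hx => ?_)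
        · linarith [(hspec hx).1]
        · linarith [(hspec hx).2]
end

section
/- For every real s, ∫_{-∞}^∞ ln(1 + e^{2πv}) · e^{2πi v s}/cosh(πv) dv = -(1/cosh(πs)) [γ + ψ(1/2 - i s)], where γ is the Euler–Mascheroni constant and ψ is the digamma function. -/
open MeasureTheory Complex Set

/-- The digamma function `ψ(z) = Γ'(z)/Γ(z)`. -/
noncomputable def digamma (z : ℂ) : ℂ := deriv Complex.Gamma z / Complex.Gamma z

lemma contOn_cpow (w : ℂ) : ContinuousOn (fun u : ℝ => (u:ℂ) ^ w) (Ioi 0) := by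
  intro u hu
  have : ContinuousAt (fun z : ℂ => z ^ w) (u:ℂ) :=
    continuousAt_cpow_const (Or.inl (by simpa using (hu : (0:ℝ) < u)))
  exact (this.comp Complex.continuous_ofReal.continuousAt).continuousWithinAt

lemma intOn_rpow_Ioc : IntegrableOn (fun u : ℝ => u ^ (-(1/2):ℝ)) (Ioc (0:ℝ) 1) := by
  rw [← intervalIntegrable_iff_integrableOn_Ioc_of_le zero_le_one]
  exact intervalIntegral.intervalIntegrable_rpow' (by norm_num)

lemma intOn_rpow_Ioi : IntegrableOn (fun u : ℝ => u ^ (-(5/4):ℝ)) (Ioi (1:ℝ)) :=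
  integrableOn_Ioi_rpow_of_lt (by norm_num) one_pos

lemma intOn_glue {E : Type*} [NormedAddCommGroup E] {g : ℝ → E} (hg : ContinuousOn g (Ioi 0))
    (C₁ C₂ : ℝ)
    (h1 : ∀ u ∈ Ioc (0:ℝ) 1, ‖g u‖ ≤ C₁ * u ^ (-(1/2):ℝ))
    (h2 : ∀ u ∈ Ioi (1:ℝ), ‖g u‖ ≤ C₂ * u ^ (-(5/4):ℝ)) : IntegrableOn g (Ioi 0) := by
  have hset : Ioi (0:ℝ) = Ioc 0 1 ∪ Ioi 1 := (Ioc_union_Ioi_eq_Ioi zero_le_one).symm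
  rw [hset]
  apply IntegrableOn.union
  · refine Integrable.mono' (intOn_rpow_Ioc.const_mul C₁)
      ((hg.mono ?_).aestronglyMeasurable measurableSet_Ioc) ?_
    · exact fun x hx => hx.1
    · exact (ae_restrict_iff' measurableSet_Ioc).2 (Filter.Eventually.of_forall h1)
  · refine Integrable.mono' (intOn_rpow_Ioi.const_mul C₂)
      ((hg.mono ?_).aestronglyMeasurable measurableSet_Ioi) ?_
    · exact fun x hx => mem_Ioi.2 (lt_trans one_pos (mem_Ioi.1 hx))
    · exact (ae_restrict_iff' measurableSet_Ioi).2 (Filter.Eventually.of_forall h2)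

open Real in
lemma norm_aux (u : ℝ) (hu : 0 < u) (c : ℝ) (w : ℂ) :
    ‖((c:ℂ)) * (u:ℂ) ^ w‖ = |c| * u ^ w.re := by
  rw [norm_mul, Complex.norm_real, Real.norm_eq_abs,
    Complex.norm_cpow_eq_rpow_re_of_pos hu]

-- integrability of u ↦ (1+u)^(-1) * u^(-1/2) style complex integrand
open Real in
lemma intOn_F_one (w : ℂ) (hw : w.re = -(1/2)) :
    IntegrableOn (fun u : ℝ => (((1+u) ^ (-(1:ℝ)) : ℝ) : ℂ) * (u:ℂ) ^ w) (Ioi 0) := by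
  apply intOn_glue (C₁ := 1) (C₂ := 1)
  · apply ContinuousOn.mul _ (contOn_cpow w)
    refine Complex.continuous_ofReal.comp_continuousOn ?_
    apply ContinuousOn.rpow_const (by fun_prop)
    intro x hx; left; have : (0:ℝ) < x := hx; positivity
  · intro u hu
    have h0 : (0:ℝ) < u := hu.1
    rw [norm_aux u h0, hw, one_mul]
    nth_rewrite 2 [show u ^ (-(1/2):ℝ) = 1 * u ^ (-(1/2):ℝ) by ring]
    apply mul_le_mul_of_nonneg_right _ (rpow_nonneg h0.le _)
    rw [_root_.abs_of_nonneg (rpow_nonneg (by positivity) _)]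
    calc (1+u) ^ (-(1:ℝ)) ≤ (1:ℝ) ^ (-(1:ℝ)) := by
          apply rpow_le_rpow_of_nonpos one_pos (by linarith) (by norm_num)
      _ = 1 := by norm_num
  · intro u hu
    have hu1 : (1:ℝ) < u := hu
    rw [norm_aux u (by linarith), hw, one_mul,
      _root_.abs_of_nonneg (rpow_nonneg (by positivity : (0:ℝ) ≤ 1 + u) _)]
    calc (1+u) ^ (-(1:ℝ)) * u ^ (-(1/2):ℝ)
        ≤ u ^ (-(1:ℝ)) * u ^ (-(1/2):ℝ) := by
          apply mul_le_mul_of_nonneg_right _ (rpow_nonneg (by linarith) _)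
          exact rpow_le_rpow_of_nonpos (by linarith) (by linarith) (by norm_num)
      _ = u ^ ((-(1:ℝ)) + (-(1/2):ℝ)) := (rpow_add (by linarith) _ _).symm
      _ ≤ u ^ (-(5/4):ℝ) := by
          apply rpow_le_rpow_of_exponent_le hu1.le (by norm_num)

open Real in
lemma intOn_bound : IntegrableOn
    (fun u : ℝ => Real.log (1+u) * (1+u) ^ (-(7/8):ℝ) * u ^ (-(1/2):ℝ)) (Ioi 0) := by
  apply intOn_glue (C₁ := 1) (C₂ := 8)
  · apply ContinuousOn.mul _ (fun x (hx : (0:ℝ) < x) => ((continuousAt_rpow_const _ _ (Or.inl (by positivity))).comp (by fun_prop)).continuousWithinAt)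
    apply ContinuousOn.mul
    · exact fun x (hx : (0:ℝ) < x) => ((Real.continuousAt_log (by positivity)).comp (by fun_prop)).continuousWithinAt
    · exact fun x (hx : (0:ℝ) < x) => ((continuousAt_rpow_const (1+x) _ (Or.inl (by positivity))).comp (by fun_prop)).continuousWithinAt
  · intro u hu
    have h0 : (0:ℝ) < u := hu.1
    have hlog : Real.log (1+u) ≤ 1 := by
      calc Real.log (1+u) ≤ (1+u) - 1 := log_le_sub_one_of_pos (by linarith)
        _ = u := by ring
        _ ≤ 1 := hu.2
    have hlog0 : 0 ≤ Real.log (1+u) := log_nonneg (by linarith)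
    have hr : (1+u) ^ (-(7/8):ℝ) ≤ 1 := rpow_le_one_of_one_le_of_nonpos (by linarith) (by norm_num)
    rw [Real.norm_eq_abs, _root_.abs_of_nonneg (by positivity), one_mul]
    nth_rewrite 2 [show u ^ (-(1/2):ℝ) = 1 * u ^ (-(1/2):ℝ) by ring]
    apply mul_le_mul_of_nonneg_right _ (rpow_nonneg h0.le _)
    calc Real.log (1+u) * (1+u) ^ (-(7/8):ℝ) ≤ 1 * 1 :=
        mul_le_mul hlog hr (rpow_nonneg (by linarith) _) zero_le_one
      _ = 1 := by norm_num
  · intro u hu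
    have hu1 : (1:ℝ) < u := hu
    have h0 : (0:ℝ) < u := by linarith
    have hlog : Real.log (1+u) ≤ 8 * (1+u) ^ ((1/8):ℝ) := by
      have := log_le_rpow_div (by linarith : (0:ℝ) ≤ 1+u) (by norm_num : (0:ℝ) < (1/8:ℝ))
      calc Real.log (1+u) ≤ (1+u) ^ ((1/8):ℝ) / (1/8) := this
        _ = 8 * (1+u) ^ ((1/8):ℝ) := by ring
    rw [Real.norm_eq_abs, _root_.abs_of_nonneg (mul_nonneg (mul_nonneg
      (log_nonneg (by linarith)) (rpow_nonneg (by linarith) _)) (rpow_nonneg h0.le _))]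
    calc Real.log (1+u) * (1+u) ^ (-(7/8):ℝ) * u ^ (-(1/2):ℝ)
        ≤ (8 * (1+u) ^ ((1/8):ℝ)) * (1+u) ^ (-(7/8):ℝ) * u ^ (-(1/2):ℝ) := by
          apply mul_le_mul_of_nonneg_right _ (rpow_nonneg h0.le _)
          exact mul_le_mul_of_nonneg_right hlog (rpow_nonneg (by linarith) _)
      _ = 8 * (1+u) ^ ((-(3/4)):ℝ) * u ^ (-(1/2):ℝ) := by
          rw [show (8:ℝ) * (1+u) ^ ((1/8):ℝ) * (1+u) ^ (-(7/8):ℝ) * u ^ (-(1/2):ℝ)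
              = 8 * ((1+u) ^ ((1/8):ℝ) * (1+u) ^ (-(7/8):ℝ)) * u ^ (-(1/2):ℝ) by ring,
            ← rpow_add (by linarith : (0:ℝ) < 1+u)]
          norm_num
      _ ≤ 8 * u ^ ((-(3/4)):ℝ) * u ^ (-(1/2):ℝ) := by
          apply mul_le_mul_of_nonneg_right _ (rpow_nonneg h0.le _)
          apply mul_le_mul_of_nonneg_left _ (by norm_num)
          exact rpow_le_rpow_of_nonpos h0 (by linarith) (by norm_num)
      _ = 8 * u ^ (-(5/4):ℝ) := by
          rw [mul_assoc, ← rpow_add h0]; norm_num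

open Real in
lemma contOn_rpow_shift (c : ℝ) : ContinuousOn (fun u : ℝ => ((((1+u) ^ c : ℝ)) : ℂ)) (Ioi 0) := by
  refine Complex.continuous_ofReal.comp_continuousOn ?_
  exact fun x (hx : (0:ℝ) < x) =>
    ((continuousAt_rpow_const (1+x) c (Or.inl (by positivity))).comp (by fun_prop)).continuousWithinAt

open Real in
lemma contOn_logmul (c : ℝ) :
    ContinuousOn (fun u : ℝ => ((-(Real.log (1+u) * (1+u) ^ c) : ℝ) : ℂ)) (Ioi 0) := by
  refine Complex.continuous_ofReal.comp_continuousOn ?_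
  apply ContinuousOn.neg
  apply ContinuousOn.mul
  · exact fun x (hx : (0:ℝ) < x) =>
      ((Real.continuousAt_log (by positivity)).comp (by fun_prop)).continuousWithinAt
  · exact fun x (hx : (0:ℝ) < x) =>
      ((continuousAt_rpow_const (1+x) c (Or.inl (by positivity))).comp (by fun_prop)).continuousWithinAt

open Real in
lemma hasDerivAt_F (w : ℂ) (hw : w.re = -(1/2)) :
    HasDerivAt (fun b : ℝ => ∫ u in Ioi (0:ℝ), (((1+u) ^ (-b) : ℝ) : ℂ) * (u:ℂ) ^ w)
      (∫ u in Ioi (0:ℝ), ((-(Real.log (1+u) * (1+u) ^ (-(1:ℝ))) : ℝ) : ℂ) * (u:ℂ) ^ w) 1 := by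
  have key := hasDerivAt_integral_of_dominated_loc_of_deriv_le
    (F := fun (b : ℝ) (u : ℝ) => (((1+u) ^ (-b) : ℝ) : ℂ) * (u:ℂ) ^ w)
    (F' := fun (b : ℝ) (u : ℝ) => ((-(Real.log (1+u) * (1+u) ^ (-b)) : ℝ) : ℂ) * (u:ℂ) ^ w)
    (x₀ := (1:ℝ)) (s := Metric.ball 1 (1/8))
    (bound := fun u => Real.log (1+u) * (1+u) ^ (-(7/8):ℝ) * u ^ (-(1/2):ℝ))
    (μ := volume.restrict (Ioi 0)) (Metric.ball_mem_nhds _ (by norm_num))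
    ?_ (intOn_F_one w hw) ?_ ?_ intOn_bound ?_
  · exact key.2
  · filter_upwards with b
    exact ((contOn_rpow_shift (-b)).mul (contOn_cpow w)).aestronglyMeasurable measurableSet_Ioi
  · exact ((contOn_logmul (-(1:ℝ))).mul (contOn_cpow w)).aestronglyMeasurable measurableSet_Ioi
  · rw [ae_restrict_iff' measurableSet_Ioi]
    filter_upwards with u hu b hb
    have h0 : (0:ℝ) < u := hu
    have hb' : -b ≤ -(7/8:ℝ) := by
      rw [Metric.mem_ball, Real.dist_eq] at hb
      have := abs_lt.1 hb
      linarith [this.1]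
    rw [norm_aux u h0 _ w, hw, abs_neg,
      _root_.abs_of_nonneg (mul_nonneg (log_nonneg (by linarith)) (rpow_nonneg (by linarith) _))]
    apply mul_le_mul_of_nonneg_right _ (rpow_nonneg h0.le _)
    apply mul_le_mul_of_nonneg_left _ (log_nonneg (by linarith))
    exact rpow_le_rpow_of_exponent_le (by linarith) hb'
  · rw [ae_restrict_iff' measurableSet_Ioi]
    filter_upwards with u hu b _
    have h0 : (0:ℝ) < u := hu
    have h1 : (0:ℝ) < 1 + u := by linarith
    have inner : HasDerivAt (fun b : ℝ => (1+u) ^ (-b)) (-(Real.log (1+u) * (1+u) ^ (-b))) b := by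
      have h := (Real.hasStrictDerivAt_const_rpow h1 (-b)).hasDerivAt
      have := h.comp b (hasDerivAt_neg b)
      refine this.congr_deriv ?_
      ring
    exact (inner.ofReal_comp).mul_const ((u:ℂ) ^ w)

lemma F_eq (a : ℂ) (ha : a.re = 1/2) (b : ℝ) (hb : 1/2 < b) :
    ∫ u in Ioi (0:ℝ), (((1+u) ^ (-b) : ℝ) : ℂ) * (u:ℂ) ^ (a-1)
      = Complex.Gamma a * Complex.Gamma ((b:ℂ) - a) / Complex.Gamma (b:ℂ) := by
  have himg : (fun x : ℝ => x/(1-x)) '' Ioo 0 1 = Ioi 0 := by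
    ext u
    constructor
    · rintro ⟨x, ⟨hx0, hx1⟩, rfl⟩
      exact div_pos hx0 (by linarith)
    · intro (hu : (0:ℝ) < u)
      refine ⟨u/(1+u), ⟨div_pos hu (by linarith), ?_⟩, ?_⟩
      · rw [div_lt_one (by linarith)]; linarith
      · field_simp; ring
  have hderiv : ∀ x ∈ Ioo (0:ℝ) 1, HasDerivWithinAt (fun x : ℝ => x/(1-x)) (((1-x)^2)⁻¹) (Ioo 0 1) x := by
    intro x ⟨hx0, hx1⟩
    have h1 : (1:ℝ) - x ≠ 0 := by linarith
    have := (hasDerivAt_id x).div ((hasDerivAt_const x (1:ℝ)).sub (hasDerivAt_id x)) h1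
    refine this.hasDerivWithinAt.congr_deriv ?_
    simp
  have hinj : InjOn (fun x : ℝ => x/(1-x)) (Ioo 0 1) := by
    intro x ⟨hx0, hx1⟩ y ⟨hy0, hy1⟩ h
    have h1 : (1:ℝ) - x ≠ 0 := by linarith
    have h2 : (1:ℝ) - y ≠ 0 := by linarith
    field_simp at h
    linarith
  have := MeasureTheory.integral_image_eq_integral_abs_deriv_smul measurableSet_Ioo hderiv hinj
    (fun u : ℝ => (((1+u) ^ (-b) : ℝ) : ℂ) * (u:ℂ) ^ (a-1))
  rw [himg] at this
  rw [this]
  have hpt : ∀ x ∈ Ioo (0:ℝ) 1,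
      |((1-x)^2)⁻¹| • ((((1+x/(1-x)) ^ (-b) : ℝ) : ℂ) * ((x/(1-x) : ℝ):ℂ) ^ (a-1))
        = (x:ℂ)^(a-1) * (1-(x:ℂ))^((b:ℂ)-a-1) := by
    intro x ⟨hx0, hx1⟩
    have h1 : (0:ℝ) < 1 - x := by linarith
    have h1' : ((1:ℂ) - x) ≠ 0 := by
      rw [show (1:ℂ) - x = ((1-x : ℝ):ℂ) by push_cast; ring]
      exact_mod_cast h1.ne'
    -- real power part
    have e1 : (1 + x/(1-x)) = (1-x)⁻¹ := by field_simp; ring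
    have e2 : ((1-x)⁻¹ : ℝ) ^ (-b) = (1-x) ^ b := by
      rw [Real.inv_rpow h1.le, ← Real.rpow_neg h1.le, neg_neg]
    -- cpow part
    have e3 : ((x/(1-x) : ℝ):ℂ) ^ (a-1) = (x:ℂ)^(a-1) * (((1-x:ℝ):ℂ))^(-(a-1)) := by
      rw [div_eq_mul_inv, Complex.ofReal_mul,
        Complex.mul_cpow_ofReal_nonneg hx0.le (inv_nonneg.2 h1.le), Complex.ofReal_inv,
        Complex.inv_cpow _ _ (by rw [Complex.arg_ofReal_of_nonneg h1.le]; exact Real.pi_ne_zero.symm),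
        ← Complex.cpow_neg]
    have habs : |(((1-x)^2)⁻¹ : ℝ)| = (((1-x)^2)⁻¹ : ℝ) := _root_.abs_of_nonneg (by positivity)
    have e5 : ((((1-x)^2)⁻¹ : ℝ) : ℂ) = ((1-x:ℝ):ℂ) ^ (-2:ℂ) := by
      rw [show (-2:ℂ) = -(2:ℕ) by norm_num, Complex.cpow_neg, Complex.cpow_natCast]
      push_cast; ring
    have e4 : (((1-x:ℝ) ^ b : ℝ) : ℂ) = ((1-x:ℝ):ℂ) ^ (b:ℂ) := Complex.ofReal_cpow h1.le b
    have h1'' : ((1-x:ℝ):ℂ) ≠ 0 := by exact_mod_cast h1.ne'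
    rw [e1, e2, e3, real_smul, habs, e5, e4,
      show (1:ℂ) - (x:ℂ) = ((1-x:ℝ):ℂ) by push_cast; ring,
      show ((1-x:ℝ):ℂ)^(-2:ℂ) * (((1-x:ℝ):ℂ)^(b:ℂ) * ((x:ℂ)^(a-1) * ((1-x:ℝ):ℂ)^(-(a-1))))
        = (x:ℂ)^(a-1) * (((1-x:ℝ):ℂ)^((-2:ℂ)+(b:ℂ)) * ((1-x:ℝ):ℂ)^(-(a-1))) by
          rw [Complex.cpow_add _ _ h1'']; ring,
      ← Complex.cpow_add _ _ h1'']
    congr 2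
    ring
  rw [setIntegral_congr_fun measurableSet_Ioo hpt]
  have hbeta : Complex.betaIntegral a ((b:ℂ)-a) = ∫ x in Ioo (0:ℝ) 1, (x:ℂ)^(a-1) * (1-(x:ℂ))^((b:ℂ)-a-1) := by
    rw [Complex.betaIntegral, intervalIntegral.integral_of_le zero_le_one,
      MeasureTheory.integral_Ioc_eq_integral_Ioo]
  rw [← hbeta]
  have hre : 0 < ((b:ℂ) - a).re := by
    simp [Complex.sub_re, ha]
    linarith
  have := Complex.Gamma_mul_Gamma_eq_betaIntegral (by rw [ha]; norm_num : 0 < a.re) hre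
  rw [show a + ((b:ℂ) - a) = (b:ℂ) by ring] at this
  have hΓb : Complex.Gamma (b:ℂ) ≠ 0 := Complex.Gamma_ne_zero_of_re_pos (by simp; linarith)
  field_simp [this]
  rw [this]; ring

lemma hasDerivAt_G (a : ℂ) (ha : a.re = 1/2) :
    HasDerivAt (fun b : ℝ => Complex.Gamma a * Complex.Gamma ((b:ℂ) - a) / Complex.Gamma (b:ℂ))
      (Complex.Gamma a * deriv Complex.Gamma (1-a)
        + (Real.eulerMascheroniConstant:ℂ) * (Complex.Gamma a * Complex.Gamma (1-a))) 1 := by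
  have hdiff : DifferentiableAt ℂ Complex.Gamma (1-a) := by
    apply Complex.differentiableAt_Gamma
    intro m h
    have := congrArg Complex.re h
    simp [ha] at this
    linarith [this, Nat.cast_nonneg (α := ℝ) m]
  have hGz : HasDerivAt (fun z : ℂ => Complex.Gamma (z - a)) (deriv Complex.Gamma (1-a) * 1) 1 :=
    hdiff.hasDerivAt.comp 1 ((hasDerivAt_id (1:ℂ)).sub_const a)
  have h1 : HasDerivAt (fun b : ℝ => Complex.Gamma ((b:ℂ) - a)) (deriv Complex.Gamma (1-a)) 1 := by
    have := hGz.comp_ofReal (z := 1)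
    simpa using this
  have h2 : HasDerivAt (fun b : ℝ => Complex.Gamma ((b:ℂ)))
      (-(Real.eulerMascheroniConstant:ℂ)) 1 := by
    have := Complex.hasDerivAt_Gamma_one.comp_ofReal (z := 1)
    simpa using this
  have := ((h1.const_mul (Complex.Gamma a)).div h2 (by simp [Complex.Gamma_one])) 
  refine this.congr_deriv ?_
  simp [Complex.Gamma_one]
  ring

lemma stepA (s : ℝ) :
    ∫ v : ℝ, (Real.log (1 + Real.exp (2*Real.pi*v)) : ℂ) *
        Complex.exp (2*Real.pi*Complex.I*v*s) / (Real.cosh (Real.pi*v) : ℂ)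
      = (Real.pi : ℂ)⁻¹ * ∫ u in Ioi (0:ℝ),
          ((Real.log (1+u) * (1+u) ^ (-(1:ℝ)) : ℝ) : ℂ) * (u:ℂ) ^ ((1/2:ℂ) + Complex.I*s - 1) := by
  set a : ℂ := (1/2:ℂ) + Complex.I*s with ha
  set g : ℝ → ℂ := fun u => (Real.pi)⁻¹ •
    (((Real.log (1+u) * (1+u) ^ (-(1:ℝ)) : ℝ) : ℂ) * (u:ℂ) ^ (a - 1)) with hg
  have hderiv : ∀ v ∈ (univ : Set ℝ), HasDerivWithinAt (fun v : ℝ => Real.exp (2*Real.pi*v))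
      (2*Real.pi*Real.exp (2*Real.pi*v)) univ v := by
    intro v _
    have inner : HasDerivAt (fun v : ℝ => 2*Real.pi*v) (2*Real.pi) v := by
      simpa using (hasDerivAt_id v).const_mul (2*Real.pi)
    have := (Real.hasDerivAt_exp (2*Real.pi*v)).comp v inner
    exact (this.congr_deriv (by ring)).hasDerivWithinAt
  have hinj : InjOn (fun v : ℝ => Real.exp (2*Real.pi*v)) univ := by
    intro x _ y _ h
    have := Real.exp_eq_exp.1 h
    have h2π : (2*Real.pi) ≠ 0 := by positivity
    exact mul_left_cancel₀ h2π this
  have himg : (fun v : ℝ => Real.exp (2*Real.pi*v)) '' univ = Ioi 0 := by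
    rw [image_univ]
    ext u
    constructor
    · rintro ⟨v, rfl⟩; exact Real.exp_pos _
    · intro (hu : (0:ℝ) < u)
      refine ⟨Real.log u / (2*Real.pi), ?_⟩
      have h2π : (2*Real.pi) ≠ 0 := by positivity
      show Real.exp (2*Real.pi*(Real.log u / (2*Real.pi))) = u
      rw [mul_div_cancel₀ _ h2π, Real.exp_log hu]
  have key := MeasureTheory.integral_image_eq_integral_abs_deriv_smul MeasurableSet.univ hderiv hinj g
  rw [himg, Measure.restrict_univ] at key
  have hpt : ∀ v : ℝ, |2*Real.pi*Real.exp (2*Real.pi*v)| • g (Real.exp (2*Real.pi*v))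
      = (Real.log (1 + Real.exp (2*Real.pi*v)) : ℂ) *
        Complex.exp (2*Real.pi*Complex.I*v*s) / (Real.cosh (Real.pi*v) : ℂ) := by
    intro v
    set t : ℝ := Real.exp (Real.pi*v) with htdef
    have ht0 : (0:ℝ) < t := Real.exp_pos _
    have h2 : Real.exp (2*Real.pi*v) = t^2 := by
      rw [htdef, ← Real.exp_nat_mul]; norm_num; ring_nf
    have hcosh : Real.cosh (Real.pi*v) = (t + t⁻¹)/2 := by
      rw [Real.cosh_eq, Real.exp_neg]
    have hcpow : ((t^2 : ℝ):ℂ) ^ (a - 1)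
        = Complex.exp (2*Real.pi*Complex.I*v*s) * ((t⁻¹ : ℝ):ℂ) := by
      have hlog : Complex.log ((t^2 : ℝ):ℂ) = ((2*Real.pi*v : ℝ):ℂ) := by
        rw [← Complex.ofReal_log (by positivity), ← h2, Real.log_exp]
      rw [Complex.cpow_def_of_ne_zero (by exact_mod_cast (by positivity : (t^2:ℝ) ≠ 0)), hlog]
      rw [show ((2*Real.pi*v : ℝ):ℂ) * (a - 1) = 2*Real.pi*Complex.I*v*s + ((-(Real.pi*v):ℝ):ℂ) by
        rw [ha]; push_cast; ring]
      rw [Complex.exp_add]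
      congr 1
      rw [← Complex.ofReal_exp, Real.exp_neg, htdef]
    simp only [hg, h2, hcosh]
    rw [hcpow, Real.rpow_neg_one]
    rw [_root_.abs_of_pos (by positivity), real_smul, real_smul]
    have hne1 : ((1:ℂ) + (t:ℂ)^2) ≠ 0 := by
      have : (0:ℝ) < 1 + t^2 := by positivity
      intro h
      rw [show (1:ℂ) + (t:ℂ)^2 = ((1+t^2 : ℝ):ℂ) by push_cast; ring] at h
      exact this.ne' (by exact_mod_cast h)
    have hne2 : ((t:ℂ) + (t:ℂ)⁻¹) ≠ 0 := by
      have : (0:ℝ) < t + t⁻¹ := by positivity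
      intro h
      rw [show (t:ℂ) + (t:ℂ)⁻¹ = ((t+t⁻¹ : ℝ):ℂ) by push_cast; ring] at h
      exact this.ne' (by exact_mod_cast h)
    have htne : (t:ℂ) ≠ 0 := by exact_mod_cast ht0.ne'
    have hπ : ((Real.pi:ℝ):ℂ) ≠ 0 := by exact_mod_cast Real.pi_ne_zero
    push_cast
    field_simp [hne1, hne2, htne, hπ]
    rw [mul_div_assoc, add_comm (1:ℂ), div_self (by rwa [add_comm]), mul_one]
  calc ∫ v : ℝ, (Real.log (1 + Real.exp (2*Real.pi*v)) : ℂ) *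
        Complex.exp (2*Real.pi*Complex.I*v*s) / (Real.cosh (Real.pi*v) : ℂ)
      = ∫ v : ℝ, |2*Real.pi*Real.exp (2*Real.pi*v)| • g (Real.exp (2*Real.pi*v)) := by
        congr 1; funext v; rw [hpt v]
    _ = ∫ u in Ioi (0:ℝ), g u := key.symm
    _ = (Real.pi : ℂ)⁻¹ * ∫ u in Ioi (0:ℝ),
          ((Real.log (1+u) * (1+u) ^ (-(1:ℝ)) : ℝ) : ℂ) * (u:ℂ) ^ (a - 1) := by
        rw [hg, integral_smul, real_smul]
        push_cast
        ring

/-- For every real `s`,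
`∫_{-∞}^∞ ln(1+e^{2πv}) e^{2πivs}/cosh(πv) dv = -(1/cosh(πs)) [γ + ψ(1/2 - is)]`,
where `γ` is the Euler–Mascheroni constant and `ψ` the digamma function. -/
theorem integral_log_exp_cosh (s : ℝ) :
    ∫ v : ℝ, (Real.log (1 + Real.exp (2*Real.pi*v)) : ℂ) *
        Complex.exp (2*Real.pi*Complex.I*v*s) / (Real.cosh (Real.pi*v) : ℂ)
      = -(1/(Real.cosh (Real.pi*s) : ℂ)) *
          ((Real.eulerMascheroniConstant : ℂ) + _root_.digamma (1/2 - Complex.I*s)) := by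
  have ha : ((1/2:ℂ) + Complex.I*(s:ℂ)).re = 1/2 := by simp
  have hw : ((1/2:ℂ) + Complex.I*(s:ℂ) - 1).re = -(1/2) := by simp; norm_num
  set a : ℂ := (1/2:ℂ) + Complex.I*(s:ℂ) with hadef
  have hF := hasDerivAt_F (a - 1) hw
  have hev : (fun b : ℝ => ∫ u in Set.Ioi (0:ℝ), (((1+u) ^ (-b) : ℝ) : ℂ) * (u:ℂ) ^ (a-1))
      =ᶠ[nhds 1] (fun b : ℝ =>
        Complex.Gamma a * Complex.Gamma ((b:ℂ) - a) / Complex.Gamma (b:ℂ)) := by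
    filter_upwards [Ioi_mem_nhds (show (1/2:ℝ) < 1 by norm_num)] with b hb
    exact F_eq a ha b hb
  have hG := (hasDerivAt_G a ha).congr_of_eventuallyEq hev
  have huniq := hG.unique hF
  -- huniq : D = ∫ F'(1)
  have hneg : (fun u : ℝ => ((-(Real.log (1+u) * (1+u) ^ (-(1:ℝ))) : ℝ) : ℂ) * (u:ℂ) ^ (a-1))
      = fun u : ℝ => -(((Real.log (1+u) * (1+u) ^ (-(1:ℝ)) : ℝ) : ℂ) * (u:ℂ) ^ (a-1)) := by
    funext u; push_cast; ring
  rw [hneg, integral_neg] at huniq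
  have hJ : (∫ u in Set.Ioi (0:ℝ), ((Real.log (1+u) * (1+u) ^ (-(1:ℝ)) : ℝ) : ℂ) * (u:ℂ) ^ (a-1))
      = -(Complex.Gamma a * deriv Complex.Gamma (1-a)
        + (Real.eulerMascheroniConstant:ℂ) * (Complex.Gamma a * Complex.Gamma (1-a))) := by
    rw [huniq, neg_neg]
  have hstep := stepA s
  rw [hadef] at hJ
  rw [hstep, hJ]
  -- reflection formula
  have hsin : Complex.sin ((Real.pi:ℂ) * ((1/2:ℂ) + Complex.I*(s:ℂ)))
      = ((Real.cosh (Real.pi*s) : ℝ) : ℂ) := by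
    rw [show ((Real.pi:ℂ) * ((1/2:ℂ) + Complex.I*(s:ℂ)))
        = (Real.pi:ℂ)/2 + ((Real.pi*s : ℝ):ℂ)*Complex.I by push_cast; ring,
      Complex.sin_add, Complex.sin_pi_div_two, Complex.cos_pi_div_two, Complex.cos_mul_I,
      ← Complex.ofReal_cosh]
    simp
  have hrefl : Complex.Gamma ((1/2:ℂ) + Complex.I*(s:ℂ))
        * Complex.Gamma (1 - ((1/2:ℂ) + Complex.I*(s:ℂ)))
      = (Real.pi:ℂ) / ((Real.cosh (Real.pi*s) : ℝ) : ℂ) := by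
    rw [Complex.Gamma_mul_Gamma_one_sub, hsin]
  have hcosh0 : (0:ℝ) < Real.cosh (Real.pi*s) := Real.cosh_pos _
  have hC : ((Real.cosh (Real.pi*s) : ℝ) : ℂ) ≠ 0 := by exact_mod_cast hcosh0.ne'
  have hP : ((Real.pi : ℝ) : ℂ) ≠ 0 := by exact_mod_cast Real.pi_ne_zero
  have hB : Complex.Gamma (1 - ((1/2:ℂ) + Complex.I*(s:ℂ))) ≠ 0 := by
    apply Complex.Gamma_ne_zero_of_re_pos
    simp
    norm_num
  have h1a : (1:ℂ) - ((1/2:ℂ) + Complex.I*(s:ℂ)) = 1/2 - Complex.I*(s:ℂ) := by ring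
  rw [h1a] at hrefl hB ⊢
  rw [_root_.digamma]
  set A := Complex.Gamma (1/2 + Complex.I*(s:ℂ)) with hAdef
  set B := Complex.Gamma (1/2 - Complex.I*(s:ℂ)) with hBdef
  set D := deriv Complex.Gamma (1/2 - Complex.I*(s:ℂ)) with hDdef
  set C := ((Real.cosh (Real.pi*s) : ℝ) : ℂ) with hCdef
  have hrefl'' : A * B * C = (Real.pi:ℂ) := by rw [hrefl, div_mul_cancel₀ _ hC]
  field_simp
  linear_combination (-(D + (Real.eulerMascheroniConstant:ℂ)*B)) * hrefl''
end

section
/- Let a² < 1 and μ > 0. Then as ε → 0⁺, the distributions f ↦ ∫_ℝ f(x) (1/x) Θ(x - [(1+x)² - a²]ε) dx + ln(μ(1-a²)ε e^{-γ}) f(0) converge (for every Schwartz f) to ⟨pv_μ Θ(x)/x, f⟩ = -∫₀^∞ f'(x) ln(μx) dx - γ f(0). -/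
/-!
Integrating by parts against `log (μ x)` on the cut-out interval `[x₋, x₊]` gives
`∫ f(x)/x = f(x₊) log(μx₊) - f(x₋) log(μx₋) - ∫_{x₋}^{x₊} f'(x) log(μx)`. Since `x₋ x₊ = 1 - a²`,
the counterterm is `(log(μx₋) + log(εx₊) - γ) f(0)`: it cancels the divergent part `f(0) log(μx₋)`
of the lower boundary term, and `εx₊ → 1`. What is left converges: `f(x₊) log(μx₊) → 0` by
Schwartz decay, `(f(x₋) - f(0)) log(μx₋) = O(x₋ log x₋) → 0`, and `f' log(μx)` is integrable on
`(0, ∞)`.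
-/

open MeasureTheory Filter Set Topology Real
open scoped Interval

theorem intervalIntegral_tendsto_integral_Ioi_of_nhdsGT {ι E : Type*} {l : Filter ι}
    [l.IsCountablyGenerated] [NormedAddCommGroup E] [NormedSpace ℝ E] {μ : Measure ℝ}
    {f : ℝ → E} {A : ℝ} {a b : ι → ℝ} (hfi : IntegrableOn f (Ioi A) μ)
    (ha : Tendsto a l (𝓝[>] A)) (hb : Tendsto b l atTop) :
    Tendsto (fun i => ∫ x in a i..b i, f x ∂μ) l (𝓝 <| ∫ x in Ioi A, f x ∂μ) := by
  have ha' : Tendsto a l (𝓝 A) := ha.mono_right nhdsWithin_le_nhds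
  have hφ : AECover (μ.restrict (Ioi A)) l fun i => Ioi (a i) ∩ Iic (b i) :=
    (aecover_Ioi_of_Ioi ha').inter (aecover_Iic hb)
  refine (hφ.integral_tendsto_of_countably_generated hfi).congr' ?_
  filter_upwards [ha.eventually self_mem_nhdsWithin,
    ha'.eventually (eventually_lt_nhds (lt_add_one A)),
    hb.eventually (eventually_ge_atTop (A + 1))] with i hAa haA hbA
  rw [intervalIntegral.integral_of_le (by linarith),
    Measure.restrict_restrict (hφ.measurableSet i), Ioi_inter_Iic,
    inter_eq_left.2 (Ioc_subset_Ioi_self.trans (Ioi_subset_Ioi hAa.le))]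

theorem hasDerivAt_log_const_mul {μ x : ℝ} (hμ : μ ≠ 0) (hx : x ≠ 0) :
    HasDerivAt (fun x => log (μ * x)) x⁻¹ x := by
  convert ((hasDerivAt_id' x).const_mul μ).log (mul_ne_zero hμ hx) using 1
  field_simp

theorem intervalIntegral_div_eq_sub_integral_mul_log {f f' : ℝ → ℝ} {μ a b : ℝ} (hμ : μ ≠ 0)
    (h0 : (0 : ℝ) ∉ [[a, b]]) (hf : ∀ x ∈ [[a, b]], HasDerivAt f (f' x) x)
    (hf' : IntervalIntegrable f' volume a b) :
    ∫ x in a..b, f x / x =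
      f b * log (μ * b) - f a * log (μ * a) - ∫ x in a..b, f' x * log (μ * x) := by
  have hne : ∀ x ∈ [[a, b]], x ≠ 0 := fun x hx h => h0 (h ▸ hx)
  simp_rw [div_eq_mul_inv]
  exact intervalIntegral.integral_mul_deriv_eq_deriv_mul hf
    (fun x hx => hasDerivAt_log_const_mul hμ (hne x hx)) hf'
    (intervalIntegral.intervalIntegrable_inv hne continuousOn_id)

theorem tendsto_mul_log_const_mul_nhds_zero (μ : ℝ) :
    Tendsto (fun x => x * log (μ * x)) (𝓝 0) (𝓝 0) := by
  rcases eq_or_ne μ 0 with rfl | hμ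
  · simp
  have h : Continuous fun x => μ⁻¹ * (μ * x * log (μ * x)) :=
    continuous_const.mul (continuous_mul_log.comp (continuous_const_mul μ))
  convert h.tendsto 0 using 2 with x
  · field_simp
  · simp

theorem tendsto_sub_mul_log_const_mul_nhds_zero {f : ℝ → ℝ} (hf : DifferentiableAt ℝ f 0)
    (μ : ℝ) : Tendsto (fun x => (f x - f 0) * log (μ * x)) (𝓝 0) (𝓝 0) := by
  refine (hf.hasDerivAt.isBigO_sub.mul
    (Asymptotics.isBigO_refl (fun x => log (μ * x)) _)).trans_tendsto ?_
  simpa using tendsto_mul_log_const_mul_nhds_zero μ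

namespace SchwartzMap

theorem integrableOn_mul_log_Ioc_zero_one (g : 𝓢(ℝ, ℝ)) :
    IntegrableOn (fun x => g x * log x) (Ioc 0 1) :=
  ((intervalIntegrable_iff_integrableOn_Ioc_of_le zero_le_one).1
    intervalIntegral.intervalIntegrable_log').bdd_mul
      g.continuous.aestronglyMeasurable (ae_of_all _ (g.norm_le_seminorm ℝ))

theorem integrableOn_mul_log_Ioi_one (g : 𝓢(ℝ, ℝ)) :
    IntegrableOn (fun x => g x * log x) (Ioi 1) := by
  refine (g.integrable_pow_mul volume 1).integrableOn.mono'
    (g.continuous.aestronglyMeasurable.mul measurable_log.aestronglyMeasurable) ?_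
  filter_upwards [ae_restrict_mem measurableSet_Ioi] with x (hx : 1 < x)
  have hlog : 0 ≤ log x := log_nonneg hx.le
  rw [norm_mul, norm_of_nonneg hlog, norm_of_nonneg (by linarith : (0 : ℝ) ≤ x), pow_one,
    mul_comm]
  exact mul_le_mul_of_nonneg_right ((log_le_sub_one_of_pos (by linarith)).trans (by linarith))
    (norm_nonneg _)

theorem integrableOn_mul_log_const_mul (g : 𝓢(ℝ, ℝ)) {μ : ℝ} (hμ : μ ≠ 0) :
    IntegrableOn (fun x => g x * log (μ * x)) (Ioi 0) := by
  have hlog : IntegrableOn (fun x => g x * log x) (Ioi 0) := by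
    rw [← Ioc_union_Ioi_eq_Ioi zero_le_one]
    exact g.integrableOn_mul_log_Ioc_zero_one.union g.integrableOn_mul_log_Ioi_one
  refine IntegrableOn.congr_fun ((g.integrable.integrableOn.const_mul (log μ)).add hlog)
    (fun x hx => ?_) measurableSet_Ioi
  simp only [Pi.add_apply, log_mul hμ (ne_of_gt hx)]
  ring

theorem tendsto_mul_log_const_mul_atTop (g : 𝓢(ℝ, ℝ)) {μ : ℝ} (hμ : μ ≠ 0) :
    Tendsto (fun x => g x * log (μ * x)) atTop (𝓝 0) := by
  have hdiv : IntegrableOn (fun x => g x * x⁻¹) (Ioi 1) := by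
    refine g.integrable.norm.integrableOn.mono' (g.continuous.aestronglyMeasurable.mul
      measurable_inv.aestronglyMeasurable) ?_
    filter_upwards [ae_restrict_mem measurableSet_Ioi] with x (hx : 1 < x)
    rw [norm_mul, norm_inv, norm_of_nonneg (by linarith : (0 : ℝ) ≤ x)]
    exact mul_le_of_le_one_right (norm_nonneg (g x)) (inv_le_one_of_one_le₀ hx.le)
  refine tendsto_zero_of_hasDerivAt_of_integrableOn_Ioi (a := 1)
    (f' := fun x => deriv g x * log (μ * x) + g x * x⁻¹) (fun x (hx : 1 < x) => ?_)
    ((((derivCLM ℝ ℝ g).integrableOn_mul_log_const_mul hμ).mono_set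
      (Ioi_subset_Ioi zero_le_one)).add hdiv)
    ((g.integrableOn_mul_log_const_mul hμ).mono_set (Ioi_subset_Ioi zero_le_one))
  exact g.differentiableAt.hasDerivAt.mul (hasDerivAt_log_const_mul hμ (by positivity))

end SchwartzMap

/-- `xMinus a ε ≤ xPlus a ε` are the roots of `ε x² - (1 - 2ε) x + (1 - a²) ε`, so that
`x ≥ ((1 + x)² - a²) ε` cuts out the interval between them. -/
noncomputable def xPlus (a ε : ℝ) : ℝ :=
  (1 - 2 * ε + √(discrim ε (-(1 - 2 * ε)) ((1 - a ^ 2) * ε))) / (2 * ε)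

noncomputable def xMinus (a ε : ℝ) : ℝ :=
  (1 - 2 * ε - √(discrim ε (-(1 - 2 * ε)) ((1 - a ^ 2) * ε))) / (2 * ε)

section cutoff

variable {a ε : ℝ}

theorem discrim_cutoff_pos (hε : ε < 1 / 4) :
    0 < discrim ε (-(1 - 2 * ε)) ((1 - a ^ 2) * ε) := by
  unfold discrim
  nlinarith [sq_nonneg (ε * a)]

theorem mul_xMinus_add_xPlus (hε : ε ≠ 0) : ε * (xMinus a ε + xPlus a ε) = 1 - 2 * ε := by
  unfold xMinus xPlus
  field_simp
  ring

theorem xMinus_mul_xPlus (hε₀ : ε ≠ 0) (hε : ε < 1 / 4) :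
    xMinus a ε * xPlus a ε = 1 - a ^ 2 := by
  have hsq := sq_sqrt (discrim_cutoff_pos (a := a) hε).le
  unfold xMinus xPlus
  generalize √(discrim ε (-(1 - 2 * ε)) ((1 - a ^ 2) * ε)) = s at hsq ⊢
  rw [discrim] at hsq
  field_simp
  linear_combination (-1 : ℝ) * hsq

theorem xMinus_le_xPlus (hε : 0 < ε) : xMinus a ε ≤ xPlus a ε := by
  unfold xMinus xPlus
  gcongr
  linarith [sqrt_nonneg (discrim ε (-(1 - 2 * ε)) ((1 - a ^ 2) * ε))]

theorem xMinus_pos (ha : a ^ 2 < 1) (hε₀ : 0 < ε) (hε : ε < 1 / 4) : 0 < xMinus a ε := by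
  have hsum := mul_xMinus_add_xPlus (a := a) hε₀.ne'
  have hprod := xMinus_mul_xPlus (a := a) hε₀.ne' hε
  have hpos : 0 < xMinus a ε + xPlus a ε := pos_of_mul_pos_right (by linarith) hε₀.le
  by_contra! h
  nlinarith [mul_nonpos_of_nonpos_of_nonneg h (by linarith : 0 ≤ xPlus a ε)]

theorem setOf_cutoff_eq_Icc (hε₀ : 0 < ε) (hε : ε < 1 / 4) :
    {x : ℝ | ((1 + x) ^ 2 - a ^ 2) * ε ≤ x} = Icc (xMinus a ε) (xPlus a ε) := by
  have hsum := mul_xMinus_add_xPlus (a := a) hε₀.ne'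
  have hprod := xMinus_mul_xPlus (a := a) hε₀.ne' hε
  have hle := xMinus_le_xPlus (a := a) hε₀
  ext x
  have hfactor :
      ((1 + x) ^ 2 - a ^ 2) * ε - x = ε * ((x - xMinus a ε) * (x - xPlus a ε)) := by
    linear_combination x * hsum - ε * hprod
  simp only [mem_ofPred_eq, mem_Icc]
  constructor
  · intro h
    have : (x - xMinus a ε) * (x - xPlus a ε) ≤ 0 := by nlinarith
    constructor <;> nlinarith
  · rintro ⟨h₁, h₂⟩
    nlinarith [mul_nonpos_of_nonneg_of_nonpos (sub_nonneg.2 h₁) (sub_nonpos.2 h₂)]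

variable (a) in
theorem tendsto_mul_xPlus : Tendsto (fun ε => ε * xPlus a ε) (𝓝[>] 0) (𝓝 1) := by
  have h :
      Continuous fun ε => (1 - 2 * ε + √(discrim ε (-(1 - 2 * ε)) ((1 - a ^ 2) * ε))) / 2 := by
    unfold discrim; fun_prop
  have h0 : (1 - 2 * 0 + √(discrim 0 (-(1 - 2 * 0)) ((1 - a ^ 2) * 0))) / 2 = (1 : ℝ) := by
    norm_num [discrim]
  rw [← h0]
  refine (h.tendsto 0).mono_left nhdsWithin_le_nhds |>.congr' ?_
  filter_upwards [self_mem_nhdsWithin] with ε (hε : 0 < ε)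
  unfold xPlus
  field_simp

variable (a) in
theorem tendsto_xPlus_atTop : Tendsto (xPlus a) (𝓝[>] 0) atTop := by
  refine ((tendsto_mul_xPlus a).pos_mul_atTop one_pos tendsto_inv_nhdsGT_zero).congr' ?_
  filter_upwards [self_mem_nhdsWithin] with ε (hε : 0 < ε)
  field_simp

theorem tendsto_xMinus_nhdsGT (ha : a ^ 2 < 1) : Tendsto (xMinus a) (𝓝[>] 0) (𝓝[>] 0) := by
  have hsmall : ∀ᶠ ε in 𝓝[>] (0 : ℝ), ε ∈ Ioo 0 (1 / 4) := Ioo_mem_nhdsGT (by norm_num)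
  refine tendsto_nhdsWithin_iff.2 ⟨?_, hsmall.mono fun ε hε => xMinus_pos ha hε.1 hε.2⟩
  have h := (tendsto_xPlus_atTop a).inv_tendsto_atTop.const_mul (1 - a ^ 2)
  rw [mul_zero] at h
  refine h.congr' ?_
  filter_upwards [hsmall] with ε hε
  have hP : xPlus a ε ≠ 0 := (xMinus_pos ha hε.1 hε.2).trans_le (xMinus_le_xPlus hε.1) |>.ne'
  rw [Pi.inv_apply, ← xMinus_mul_xPlus hε.1.ne' hε.2, mul_inv_cancel_right₀ hP]

end cutoff

theorem integral_setOf_cutoff_add_log_eq {f : ℝ → ℝ} (hf : ContDiff ℝ 1 f) {a μ ε : ℝ} (c : ℝ)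
    (ha : a ^ 2 < 1) (hμ : μ ≠ 0) (hε₀ : 0 < ε) (hε : ε < 1 / 4) :
    (∫ x in {x : ℝ | ((1 + x) ^ 2 - a ^ 2) * ε ≤ x}, f x / x) +
        log (μ * (1 - a ^ 2) * ε * exp (-c)) * f 0 =
      f (xPlus a ε) * log (μ * xPlus a ε) - (f (xMinus a ε) - f 0) * log (μ * xMinus a ε) -
        (∫ x in xMinus a ε..xPlus a ε, deriv f x * log (μ * x)) +
          log (ε * xPlus a ε) * f 0 - c * f 0 := by
  have hM := xMinus_pos ha hε₀ hε
  have hMP := xMinus_le_xPlus (a := a) hε₀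
  have hP := hM.trans_le hMP
  have hlog : log (μ * (1 - a ^ 2) * ε * exp (-c)) =
      log (μ * xMinus a ε) + log (ε * xPlus a ε) - c := by
    rw [← xMinus_mul_xPlus hε₀.ne' hε,
      show μ * (xMinus a ε * xPlus a ε) * ε * exp (-c) =
        μ * xMinus a ε * (ε * xPlus a ε) * exp (-c) by ring,
      log_mul (by positivity) (exp_pos _).ne', log_mul (by positivity) (by positivity), log_exp]
    ring
  have h0 : (0 : ℝ) ∉ [[xMinus a ε, xPlus a ε]] := by
    rw [uIcc_of_le hMP]
    exact fun h => hM.not_ge h.1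
  rw [setOf_cutoff_eq_Icc hε₀ hε, integral_Icc_eq_integral_Ioc,
    ← intervalIntegral.integral_of_le hMP,
    intervalIntegral_div_eq_sub_integral_mul_log hμ h0
      (fun x _ => (hf.differentiable one_ne_zero x).hasDerivAt)
      ((hf.continuous_deriv le_rfl).intervalIntegrable _ _), hlog]
  ring

/-- For `a² < 1` and `μ > 0`, the distributions
`f ↦ ∫ f(x) (1/x) Θ(x - [(1+x)²-a²]ε) dx + ln(μ(1-a²)ε e^{-γ}) f(0)` converge
as `ε → 0⁺`, for every Schwartz `f`, to
`⟨pv_μ Θ(x)/x, f⟩ = -∫₀^∞ f'(x) ln(μx) dx - γ f(0)`. -/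
theorem pvTheta_coordinate_limit (a μ : ℝ) (ha : a^2 < 1) (hμ : 0 < μ)
    (f : SchwartzMap ℝ ℝ) :
    Tendsto (fun ε : ℝ =>
        (∫ x in {x : ℝ | ((1+x)^2 - a^2) * ε ≤ x}, f x / x) +
          Real.log (μ * (1 - a^2) * ε * Real.exp (-Real.eulerMascheroniConstant)) * f 0)
      (nhdsWithin 0 (Set.Ioi 0))
      (nhds (-(∫ x in Set.Ioi (0 : ℝ), deriv f x * Real.log (μ*x))
        - Real.eulerMascheroniConstant * f 0)) := by
  have hM := tendsto_xMinus_nhdsGT ha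
  have hP := tendsto_xPlus_atTop a
  have hupper := (f.tendsto_mul_log_const_mul_atTop hμ.ne').comp hP
  have hlower := (tendsto_sub_mul_log_const_mul_nhds_zero f.differentiableAt μ).comp
    (hM.mono_right nhdsWithin_le_nhds)
  have hderiv : IntegrableOn (fun x => deriv f x * log (μ * x)) (Ioi 0) := by
    simpa only [SchwartzMap.derivCLM_apply] using
      (SchwartzMap.derivCLM ℝ ℝ f).integrableOn_mul_log_const_mul hμ.ne'
  have hmiddle := intervalIntegral_tendsto_integral_Ioi_of_nhdsGT hderiv hM hP
  have hlog : Tendsto (fun ε => log (ε * xPlus a ε)) (𝓝[>] 0) (𝓝 0) := by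
    simpa only [log_one] using (tendsto_mul_xPlus a).log one_ne_zero
  have hsmall : ∀ᶠ ε in 𝓝[>] (0 : ℝ), ε ∈ Ioo 0 (1 / 4) := Ioo_mem_nhdsGT (by norm_num)
  have hlim := (((hupper.sub hlower).sub hmiddle).add (hlog.mul_const (f 0))).sub_const
    (eulerMascheroniConstant * f 0)
  rw [sub_self, zero_sub, zero_mul, add_zero] at hlim
  exact hlim.congr' (hsmall.mono fun ε hε =>
    (integral_setOf_cutoff_add_log_eq (f.smooth 1) _ ha hμ.ne' hε.1 hε.2).symm)
end
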